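/- The group G is metabelian: its commutator subgroup ⁅G,G⁆ is abelian; moreover ⁅G,G⁆ is isomorphic (as a group) to ℤ × ℤ. -/

import Mathlib

/-!
Since `ℤ[√2] → ℝ` is injective we may work in `GL₂(ℤ[√2])`, where both generators are matrices of
affine maps `t ↦ u t + x` with `u ∈ ℤ[√2]ˣ`, `x ∈ ℤ[√2]`: `g` is `t ↦ (1 + √2) t` and `h` is
`t ↦ t + 1`. The commutator of `t ↦ u t + x` and `t ↦ v t + y` is the translation by
`(u - 1) y + (1 - v) x`, and every unit of `ℤ[√2]` is `≡ 1` modulo the ideal `(√2)`, whose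
quotient is `𝔽₂`. Hence `⁅G, G⁆` consists of translations by elements of `(√2) = ℤ√2 ⊕ 2ℤ`.
Conversely `⁅g, h⁆` and `⁅g, ⁅g, h⁆⁆` are the translations by `√2` and by `2`, so `⁅G, G⁆` is
the whole translation group of `(√2) ≅ ℤ²`.
-/

open Zsqrtd Matrix
open scoped commutatorElement

section Affine

variable {R : Type*} [CommRing R]

def affineMatrix (u : Rˣ) (x : R) : GL (Fin 2) R where
  val := !![u, x; 0, 1]
  inv := !![↑u⁻¹, -(↑u⁻¹ * x); 0, 1]
  val_inv := by
    ext i j; fin_cases i <;> fin_cases j <;> simp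
  inv_val := by
    ext i j; fin_cases i <;> fin_cases j <;> simp

theorem affineMatrix_mul (u v : Rˣ) (x y : R) :
    affineMatrix u x * affineMatrix v y = affineMatrix (u * v) (u * y + x) := by
  ext i j; fin_cases i <;> fin_cases j <;> simp [affineMatrix, Matrix.mul_apply]

theorem affineMatrix_inv (u : Rˣ) (x : R) :
    (affineMatrix u x)⁻¹ = affineMatrix u⁻¹ (-(↑u⁻¹ * x)) :=
  Units.ext rfl

theorem affineMatrix_one_zero : affineMatrix (1 : Rˣ) (0 : R) = 1 := by
  ext i j; fin_cases i <;> fin_cases j <;> simp [affineMatrix]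

theorem commutatorElement_affineMatrix (u v : Rˣ) (x y : R) :
    ⁅affineMatrix u x, affineMatrix v y⁆ = affineMatrix 1 ((u - 1) * y + (1 - v) * x) := by
  simp only [commutatorElement_def, affineMatrix_inv, affineMatrix_mul]
  congr 1
  · rw [mul_comm u v, mul_inv_cancel_right, mul_inv_cancel]
  · simp only [Units.val_mul]
    linear_combination (-(↑v * ↑v⁻¹ * y) - ↑v * x) * u.mul_inv + (-y) * v.mul_inv

def translation : Multiplicative R →* GL (Fin 2) R where
  toFun x := affineMatrix 1 x.toAdd
  map_one' := affineMatrix_one_zero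
  map_mul' x y := by rw [affineMatrix_mul, mul_one, Units.val_one, one_mul, toAdd_mul, add_comm]

theorem translation_apply (x : Multiplicative R) : translation x = affineMatrix 1 x.toAdd := rfl

theorem translation_injective : Function.Injective (translation (R := R)) := fun x y hxy => by
  simpa [translation_apply, affineMatrix] using congrArg (fun A : GL (Fin 2) R => A 0 1) hxy

theorem commutatorElement_affineMatrix_translation (u : Rˣ) (y : R) :
    ⁅affineMatrix u 0, translation (.ofAdd y)⁆ = translation (.ofAdd ((u - 1) * y)) := by
  rw [translation_apply, commutatorElement_affineMatrix]
  simp [translation_apply]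

variable (R) in
def affineSubgroup : Subgroup (GL (Fin 2) R) where
  carrier := Set.range fun p : Rˣ × R => affineMatrix p.1 p.2
  one_mem' := ⟨(1, 0), affineMatrix_one_zero⟩
  mul_mem' := by
    rintro _ _ ⟨⟨u, x⟩, rfl⟩ ⟨⟨v, y⟩, rfl⟩
    exact ⟨(u * v, u * y + x), (affineMatrix_mul u v x y).symm⟩
  inv_mem' := by
    rintro _ ⟨⟨u, x⟩, rfl⟩
    exact ⟨(u⁻¹, -(↑u⁻¹ * x)), (affineMatrix_inv u x).symm⟩

theorem commutator_affineSubgroup_le {I : Ideal R} (hI : ∀ u : Rˣ, (u : R) - 1 ∈ I) :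
    ⁅affineSubgroup R, affineSubgroup R⁆ ≤ I.toAddSubgroup.toSubgroup.map translation := by
  rw [Subgroup.commutator_le]
  rintro _ ⟨⟨u, x⟩, rfl⟩ _ ⟨⟨v, y⟩, rfl⟩
  refine ⟨.ofAdd ((u - 1) * y + (1 - v) * x), ?_, (commutatorElement_affineMatrix u v x y).symm⟩
  have hv : 1 - (v : R) ∈ I := by simpa using I.neg_mem (hI v)
  exact I.add_mem (I.mul_mem_right y (hI u)) (I.mul_mem_right x hv)

end Affine

theorem Matrix.GeneralLinearGroup.map_injective {n R S : Type*} [Fintype n] [DecidableEq n]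
    [CommRing R] [CommRing S] {f : R →+* S} (hf : Function.Injective f) :
    Function.Injective (map (n := n) f) := fun A B hAB =>
  ext fun i j => hf <| by simpa [map_apply] using congrArg (fun C : GL n S => C i j) hAB

theorem sub_one_mem_ker_of_subsingleton_units {R S : Type*} [Ring R] [Ring S] [Subsingleton Sˣ]
    (f : R →+* S) (u : Rˣ) : (u : R) - 1 ∈ RingHom.ker f := by
  rw [RingHom.mem_ker, map_sub, map_one, sub_eq_zero]
  exact congrArg Units.val (Subsingleton.elim (Units.map (f : R →* S) u) 1)

namespace Zsqrtd

def silverRatio : (ℤ√2)ˣ where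
  val := ⟨1, 1⟩
  inv := ⟨-1, 1⟩
  val_inv := by ext <;> simp
  inv_val := by ext <;> simp

theorem silverRatio_sub_one : (silverRatio : ℤ√2) - 1 = sqrtd := by
  ext <;> simp [silverRatio]

-- The quotient map `ℤ√2 → ℤ√2 ⧸ (√2) ≅ 𝔽₂`.
def reModTwo : ℤ√2 →+* ZMod 2 := lift ⟨0, by decide⟩

theorem reModTwo_apply (x : ℤ√2) : reModTwo x = x.re := by
  simp [reModTwo]

def sqrtTwoLattice : ℤ × ℤ →+ ℤ√2 := (zmultiplesHom _ sqrtd).coprod (zmultiplesHom _ 2)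

theorem sqrtTwoLattice_apply (p : ℤ × ℤ) : sqrtTwoLattice p = ⟨2 * p.2, p.1⟩ := by
  ext <;> simp [sqrtTwoLattice, mul_comm]

theorem sqrtTwoLattice_injective : Function.Injective sqrtTwoLattice := by
  intro p q hpq
  simp only [sqrtTwoLattice_apply, Zsqrtd.mk.injEq] at hpq
  exact Prod.ext hpq.2 (by omega)

theorem range_sqrtTwoLattice : sqrtTwoLattice.range = (RingHom.ker reModTwo).toAddSubgroup := by
  ext x
  simp only [AddMonoidHom.mem_range, Submodule.mem_toAddSubgroup, RingHom.mem_ker, reModTwo_apply,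
    ZMod.intCast_zmod_eq_zero_iff_dvd, sqrtTwoLattice_apply]
  constructor
  · rintro ⟨p, rfl⟩
    exact dvd_mul_right 2 p.2
  · rintro ⟨b, hb⟩
    exact ⟨(x.im, b), by ext <;> simp [hb]⟩

end Zsqrtd

open Zsqrtd

def silverAffineGroup : Subgroup (GL (Fin 2) (ℤ√2)) :=
  Subgroup.closure {affineMatrix silverRatio 0, affineMatrix 1 1}

theorem commutator_silverAffineGroup_eq_range :
    ⁅silverAffineGroup, silverAffineGroup⁆ =
      (translation.comp (AddMonoidHom.toMultiplicative sqrtTwoLattice)).range := by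
  set H := silverAffineGroup
  apply _root_.le_antisymm
  · have hH : H ≤ affineSubgroup (ℤ√2) :=
      (Subgroup.closure_le _).mpr (Set.pair_subset_iff.mpr ⟨⟨(silverRatio, 0), rfl⟩, ⟨(1, 1), rfl⟩⟩)
    calc ⁅H, H⁆ ≤ ⁅affineSubgroup (ℤ√2), affineSubgroup (ℤ√2)⁆ := Subgroup.commutator_mono hH hH
      _ ≤ (RingHom.ker reModTwo).toAddSubgroup.toSubgroup.map translation :=
        commutator_affineSubgroup_le (sub_one_mem_ker_of_subsingleton_units reModTwo)
      _ = _ := by rw [← range_sqrtTwoLattice, MonoidHom.range_comp]; rfl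
  · have hg : affineMatrix silverRatio 0 ∈ H := Subgroup.subset_closure (by simp)
    have hh : translation (.ofAdd 1) ∈ H := Subgroup.subset_closure (by simp [translation_apply])
    have hgh : translation (.ofAdd sqrtd) ∈ ⁅H, H⁆ := by
      simpa [commutatorElement_affineMatrix_translation, silverRatio_sub_one]
        using Subgroup.commutator_mem_commutator hg hh
    have hggh : translation (.ofAdd 2) ∈ ⁅H, H⁆ := by
      simpa [commutatorElement_affineMatrix_translation, silverRatio_sub_one, dmuld]
        using Subgroup.commutator_mem_commutator hg (H.commutator_le_self hgh)
    rintro _ ⟨p, rfl⟩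
    have hp : translation.comp (AddMonoidHom.toMultiplicative sqrtTwoLattice) p =
        translation (.ofAdd sqrtd) ^ p.toAdd.1 * translation (.ofAdd 2) ^ p.toAdd.2 := by
      simp [sqrtTwoLattice, ← map_zpow, ← map_mul, ← ofAdd_zsmul, ← ofAdd_add]
    rw [hp]
    exact mul_mem (zpow_mem hgh _) (zpow_mem hggh _)

noncomputable def commutatorSilverAffineGroupEquiv :
    ↥⁅silverAffineGroup, silverAffineGroup⁆ ≃* Multiplicative (ℤ × ℤ) :=
  ((MonoidHom.ofInjective (translation_injective.comp sqrtTwoLattice_injective)).trans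
    (MulEquiv.subgroupCongr commutator_silverAffineGroup_eq_range.symm)).symm

theorem toReal_sqrtTwo_injective : Function.Injective (toReal (d := 2) zero_le_two) :=
  toReal_injective _ fun n h => Int.sq_ne_two_mod_four n (by rw [← h]; rfl)

/-- The group `G = ⟨g, h⟩ ≤ GL₂(ℝ)`, where `g = !![1+√2, 0; 0, 1]` and
`h = !![1, 1; 0, 1]`, is metabelian: its commutator subgroup is abelian; moreover the
commutator subgroup is isomorphic to `ℤ × ℤ`. -/
theorem stmt9 (g h : (Matrix (Fin 2) (Fin 2) ℝ)ˣ)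
    (hg : (g : Matrix (Fin 2) (Fin 2) ℝ) = !![1 + Real.sqrt 2, 0; 0, 1])
    (hh : (h : Matrix (Fin 2) (Fin 2) ℝ) = !![1, 1; 0, 1]) :
    (∀ a b : ↥⁅Subgroup.closure {g, h}, Subgroup.closure {g, h}⁆, a * b = b * a) ∧
    Nonempty (↥⁅Subgroup.closure {g, h}, Subgroup.closure {g, h}⁆
      ≃* Multiplicative (ℤ × ℤ)) := by
  set φ := GeneralLinearGroup.map (n := Fin 2) (toReal (d := 2) zero_le_two)
  have hg' : g = φ (affineMatrix silverRatio 0) := GeneralLinearGroup.ext fun i j => by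
    rw [hg]
    fin_cases i <;> fin_cases j <;>
      simp [φ, GeneralLinearGroup.map_apply, affineMatrix, silverRatio, toReal]
  have hh' : h = φ (affineMatrix 1 1) := GeneralLinearGroup.ext fun i j => by
    rw [hh]
    fin_cases i <;> fin_cases j <;> simp [φ, GeneralLinearGroup.map_apply, affineMatrix]
  have e : ↥⁅Subgroup.closure {g, h}, Subgroup.closure {g, h}⁆ ≃* Multiplicative (ℤ × ℤ) := by
    rw [hg', hh', ← Set.image_pair, ← MonoidHom.map_closure, ← Subgroup.map_commutator]
    exact (Subgroup.equivMapOfInjective _ φ (GeneralLinearGroup.map_injective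
      toReal_sqrtTwo_injective)).symm.trans commutatorSilverAffineGroupEquiv
  exact ⟨fun a b => e.injective (by rw [map_mul, map_mul, mul_comm]), ⟨e⟩⟩
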